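/- arXiv:1602.07268 — 2 statements merged into one kernel-verified Lean document; each statement's English description precedes it below -/
import Mathlib

section
/- Let (X_n) be a sequence of pairwise independent, identically distributed real-valued random variables with E|X_1| < ∞. Then S_n/n → E X_1 almost surely as n → ∞, where S_n = X_1 + ... + X_n. -/
open MeasureTheory ProbabilityTheory Filter

theorem Finset.sum_Icc_one_eq_sum_range {M : Type*} [AddCommMonoid M] (f : ℕ → M) (n : ℕ) :
    ∑ k ∈ Finset.Icc 1 n, f k = ∑ i ∈ Finset.range n, f (i + 1) := by
  rw [← Finset.Ico_add_one_right_eq_Icc, Finset.sum_Ico_eq_sum_range, Nat.add_sub_cancel]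
  simp only [add_comm 1]

theorem etemadi_slln_general {Ω : Type*} [MeasureSpace Ω]
    (X : ℕ → Ω → ℝ)
    (hpind : Pairwise fun i j => IndepFun (X i) (X j) ℙ)
    (hid : ∀ n, 1 ≤ n → IdentDistrib (X n) (X 1) ℙ ℙ)
    (hint : Integrable (X 1) ℙ) :
    ∀ᵐ ω ∂(ℙ : Measure Ω),
      Tendsto (fun n : ℕ => (∑ k ∈ Finset.Icc 1 n, X k ω) / (n : ℝ)) atTop
        (nhds (∫ ω, X 1 ω ∂(ℙ : Measure Ω))) := by
  have hshift := strong_law_ae_real (fun i => X (i + 1)) hint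
    (fun i j hij => hpind (by simpa using hij)) (fun i => hid (i + 1) i.succ_pos)
  simpa only [Finset.sum_Icc_one_eq_sum_range] using hshift

theorem etemadi_slln {Ω : Type*} [MeasureSpace Ω] [IsProbabilityMeasure (ℙ : Measure Ω)]
    (X : ℕ → Ω → ℝ)
    (hpind : Pairwise fun i j => IndepFun (X i) (X j) ℙ)
    (hid : ∀ n, 1 ≤ n → IdentDistrib (X n) (X 1) ℙ ℙ)
    (hint : Integrable (X 1) ℙ) :
    ∀ᵐ ω ∂(ℙ : Measure Ω),
      Tendsto (fun n : ℕ => (∑ k ∈ Finset.Icc 1 n, X k ω) / (n : ℝ)) atTop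
        (nhds (∫ ω, X 1 ω ∂(ℙ : Measure Ω))) :=
  etemadi_slln_general X hpind hid hint
end

section
/- Let 1 < p < 2, 1 ≤ r ≤ p, ε > 0, and let (X_n) be identically distributed real random variables with E|X_1|^p < ∞. For t ∈ [-π, π) let S_k''(t) = ∑_{j=1}^k e^{ijt} X_j 1{|X_j| > n^{1/r}}. Then for each fixed t, ∑_{n=1}^∞ n^{p/r−2} P(max_{1≤k≤n} |S_k''(t)| > ε n^{1/r}) ≤ C ε^{-1} E|X_1|^p < ∞. -/
/-!
On the event in question the triangle inequality bounds every partial sum by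
`∑_{j ≤ n+1} |X_j| 1{|X_j| > (n+1)^{1/r}}`, so Markov's inequality and identical distribution bound
the `n`-th probability by `(n+1) E[|X_1|; |X_1| > (n+1)^{1/r}] / (ε (n+1)^{1/r})`. After exchanging
sum and expectation one is left, for `x = |X_1|`, with `x ∑_{n+1 < x^r} (n+1)^{(p-1)/r-1}`, which a
comparison with `∫ s^{(p-1)/r-1} ds` bounds by `(1 + r/(p-1)) x^p`.
-/

open MeasureTheory ProbabilityTheory Real Finset
open scoped ENNReal

lemma sum_range_rpow_le_of_neg {β : ℝ} (hβ : -1 < β) (hβ0 : β < 0) (N : ℕ) :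
    ∑ i ∈ range N, ((i : ℝ) + 1) ^ β ≤ (1 + 1 / (β + 1)) * (N : ℝ) ^ (β + 1) := by
  have hγ : 0 < β + 1 := by linarith
  obtain _ | M := N
  · simp [zero_rpow hγ.ne']
  have hanti : AntitoneOn (fun x : ℝ => x ^ β) (Set.Icc 1 (1 + M)) := fun x hx y _ hxy =>
    rpow_le_rpow_of_nonpos (one_pos.trans_le hx.1) hxy hβ0.le
  have hcompare := hanti.sum_le_integral
  rw [integral_rpow (Or.inl hβ), one_rpow] at hcompare
  have hM : (1 : ℝ) ≤ (1 + M) ^ (β + 1) := one_le_rpow (by linarith [M.cast_nonneg (α := ℝ)]) hγ.le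
  have hdiv : ((1 + M : ℝ) ^ (β + 1) - 1) / (β + 1) ≤ (1 + M : ℝ) ^ (β + 1) / (β + 1) := by
    gcongr; linarith
  have hsum : ∑ i ∈ range (M + 1), ((i : ℝ) + 1) ^ β
      = ∑ i ∈ range M, (1 + ((i + 1 : ℕ) : ℝ)) ^ β + 1 := by
    rw [sum_range_succ']; push_cast; simp [add_comm]
  rw [hsum, Nat.cast_add_one, add_comm (M : ℝ) 1]
  calc _ ≤ ((1 + M : ℝ) ^ (β + 1) - 1) / (β + 1) + 1 := by linarith
    _ ≤ _ := by rw [add_mul, one_mul, one_div_mul_eq_div]; linarith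

lemma sum_range_rpow_le {β : ℝ} (hβ : -1 < β) (N : ℕ) :
    ∑ i ∈ range N, ((i : ℝ) + 1) ^ β ≤ (1 + 1 / (β + 1)) * (N : ℝ) ^ (β + 1) := by
  rcases lt_or_ge β 0 with hβ0 | hβ0
  · exact sum_range_rpow_le_of_neg hβ hβ0 N
  calc ∑ i ∈ range N, ((i : ℝ) + 1) ^ β ≤ ∑ _i ∈ range N, (N : ℝ) ^ β :=
        sum_le_sum fun i hi => rpow_le_rpow (by positivity)
          (by exact_mod_cast Nat.succ_le_of_lt (mem_range.1 hi)) hβ0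
    _ = (N : ℝ) ^ (β + 1) := by
        rw [sum_const, card_range, nsmul_eq_mul, rpow_add_one' N.cast_nonneg (by linarith),
          mul_comm]
    _ ≤ _ := le_mul_of_one_le_left (by positivity) (le_add_of_nonneg_right (by positivity))

lemma tsum_ofReal_ite_rpow_le {β : ℝ} (hβ : -1 < β) {z : ℝ} (hz : 0 ≤ z) :
    ∑' n : ℕ, ENNReal.ofReal (if (n + 1 : ℝ) < z then (n + 1 : ℝ) ^ β else 0)
      ≤ ENNReal.ofReal ((1 + 1 / (β + 1)) * z ^ (β + 1)) := by
  have hvanish : ∀ n ∉ range ⌊z⌋₊,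
      ENNReal.ofReal (if (n + 1 : ℝ) < z then (n + 1 : ℝ) ^ β else 0) = 0 := by
    intro n hn
    have hzn : z < n + 1 := (Nat.lt_floor_add_one z).trans_le (by
      exact_mod_cast Nat.succ_le_succ (not_lt.1 (mem_range.not.1 hn)))
    rw [if_neg hzn.not_gt, ENNReal.ofReal_zero]
  rw [tsum_eq_sum hvanish, ← ENNReal.ofReal_sum_of_nonneg fun n _ => by split_ifs <;> positivity]
  refine ENNReal.ofReal_le_ofReal ?_
  calc _ ≤ ∑ i ∈ range ⌊z⌋₊, ((i : ℝ) + 1) ^ β :=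
        sum_le_sum fun i _ => by split_ifs <;> first | rfl | positivity
    _ ≤ (1 + 1 / (β + 1)) * (⌊z⌋₊ : ℝ) ^ (β + 1) := sum_range_rpow_le hβ _
    _ ≤ _ := by
        have : 0 < β + 1 := by linarith
        gcongr; exact Nat.floor_le hz

lemma tsum_rpow_weight_mul_enorm_ite_le {p r ε : ℝ} (hp : 1 < p) (hr : 0 < r) (hε : 0 < ε)
    (y : ℝ) :
    ∑' n : ℕ, ENNReal.ofReal ((n + 1 : ℝ) ^ (p / r - 2)) *
        ENNReal.ofReal (ε * (n + 1 : ℝ) ^ (1 / r))⁻¹ * ((n + 1 : ℕ) : ℝ≥0∞) *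
        ‖if (n + 1 : ℝ) ^ (1 / r) < |y| then y else 0‖ₑ
      ≤ ENNReal.ofReal ((1 + r / (p - 1)) * ε⁻¹ * |y| ^ p) := by
  obtain ⟨β, hβ⟩ : ∃ β : ℝ, β = (p - 1) / r - 1 := ⟨_, rfl⟩
  have hβ1 : -1 < β := by have : 0 < (p - 1) / r := div_pos (by linarith) hr; linarith
  calc _ = ∑' n : ℕ, ENNReal.ofReal (ε⁻¹ * |y|) *
        ENNReal.ofReal (if (n + 1 : ℝ) < |y| ^ r then (n + 1 : ℝ) ^ β else 0) := by
        refine tsum_congr fun n => ?_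
        have hn : (0 : ℝ) < n + 1 := by positivity
        have hiff : (n + 1 : ℝ) ^ (1 / r) < |y| ↔ (n + 1 : ℝ) < |y| ^ r := by
          rw [one_div, rpow_inv_lt_iff_of_pos hn.le (abs_nonneg y) hr]
        by_cases h : (n + 1 : ℝ) < |y| ^ r
        · have hpow : (n + 1 : ℝ) ^ β =
              (n + 1 : ℝ) ^ (p / r - 2) * (n + 1 : ℝ) ^ (-(1 / r)) * (n + 1) := by
            rw [← rpow_add hn, ← rpow_add_one hn.ne', hβ]; congr 1; ring
          rw [if_pos (hiff.2 h), if_pos h, enorm_eq_ofReal_abs, ← ENNReal.ofReal_natCast,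
            ← ENNReal.ofReal_mul (by positivity), ← ENNReal.ofReal_mul (by positivity),
            ← ENNReal.ofReal_mul (by positivity), ← ENNReal.ofReal_mul (by positivity), hpow,
            mul_inv, ← rpow_neg hn.le]
          congr 1
          push_cast
          ring
        · rw [if_neg (mt hiff.1 h), if_neg h]; simp
    _ = ENNReal.ofReal (ε⁻¹ * |y|) *
        ∑' n : ℕ, ENNReal.ofReal (if (n + 1 : ℝ) < |y| ^ r then (n + 1 : ℝ) ^ β else 0) :=
        ENNReal.tsum_mul_left
    _ ≤ ENNReal.ofReal (ε⁻¹ * |y|) * ENNReal.ofReal ((1 + 1 / (β + 1)) * (|y| ^ r) ^ (β + 1)) :=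
        by gcongr; exact tsum_ofReal_ite_rpow_le hβ1 (by positivity)
    _ = _ := by
        rw [← ENNReal.ofReal_mul (by positivity)]
        congr 1
        have hyp : |y| ^ p = |y| ^ (p - 1) * |y| := by
          rw [← rpow_add_one' (abs_nonneg y) (by linarith), sub_add_cancel]
        rw [hβ, sub_add_cancel, one_div_div, ← rpow_mul (abs_nonneg y), mul_div_cancel₀ _ hr.ne',
          hyp]
        ring

lemma enorm_sum_exp_mul_le (t : ℝ) (x : ℕ → ℝ) {k m : ℕ} (hkm : k ≤ m) :
    ‖∑ j ∈ Icc 1 k, Complex.exp (Complex.I * j * t) * (x j : ℂ)‖ₑ ≤ ∑ j ∈ Icc 1 m, ‖x j‖ₑ :=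
  calc _ ≤ ∑ j ∈ Icc 1 k, ‖Complex.exp (Complex.I * j * t) * (x j : ℂ)‖ₑ := enorm_sum_le _ _
    _ = ∑ j ∈ Icc 1 k, ‖x j‖ₑ := sum_congr rfl fun j _ => by
        have : Complex.I * j * t = ((j * t : ℝ) : ℂ) * Complex.I := by push_cast; ring
        rw [enorm_mul, this, Complex.enorm_exp_ofReal_mul_I, one_mul, ← ofReal_norm, ← ofReal_norm,
          Complex.norm_real]
    _ ≤ _ := sum_le_sum_of_subset (Icc_subset_Icc_right hkm)

lemma measurable_enorm_ite_lt_abs (a : ℝ) :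
    Measurable fun y : ℝ => ‖if a < |y| then y else 0‖ₑ :=
  (Measurable.ite (measurableSet_lt measurable_const measurable_abs) measurable_id
    measurable_const).enorm

section Probability

variable {Ω ι : Type*} [MeasurableSpace Ω] {μ : Measure Ω}

lemma meas_ge_sum_comp_le_card_mul_lintegral_div {s : Finset ι} {X : ι → Ω → ℝ} {Y : Ω → ℝ}
    (hid : ∀ j ∈ s, IdentDistrib (X j) Y μ μ) {f : ℝ → ℝ≥0∞} (hf : Measurable f) {c : ℝ≥0∞}
    (hc0 : c ≠ 0) (hc : c ≠ ∞) :
    μ {ω | c ≤ ∑ j ∈ s, f (X j ω)} ≤ #s * (∫⁻ ω, f (Y ω) ∂μ) / c := by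
  have hmeas : ∀ j ∈ s, AEMeasurable (fun ω => f (X j ω)) μ := fun j hj =>
    hf.comp_aemeasurable (hid j hj).aemeasurable_fst
  calc _ ≤ (∫⁻ ω, ∑ j ∈ s, f (X j ω) ∂μ) / c :=
        meas_ge_le_lintegral_div (Finset.aemeasurable_fun_sum s hmeas) hc0 hc
    _ = _ := by
        have hsame : ∀ j ∈ s, ∫⁻ ω, f (X j ω) ∂μ = ∫⁻ ω, f (Y ω) ∂μ := fun j hj =>
          ((hid j hj).comp hf).lintegral_eq
        rw [lintegral_finsetSum' s hmeas, sum_congr rfl hsame, sum_const, nsmul_eq_mul]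

lemma measure_exists_norm_partial_sum_gt_le {X : ℕ → Ω → ℝ} {m : ℕ}
    (hid : ∀ j ∈ Icc 1 m, IdentDistrib (X j) (X 1) μ μ) (t a : ℝ) {c : ℝ} (hc : 0 < c) :
    μ {ω | ∃ k ∈ Icc 1 m, c < ‖(∑ j ∈ Icc 1 k,
        Complex.exp (Complex.I * j * t) * (if a < |X j ω| then X j ω else 0) : ℂ)‖}
      ≤ ENNReal.ofReal c⁻¹ * m * ∫⁻ ω, ‖if a < |X 1 ω| then X 1 ω else 0‖ₑ ∂μ := by
  calc _ ≤ μ {ω | ENNReal.ofReal c ≤ ∑ j ∈ Icc 1 m, ‖if a < |X j ω| then X j ω else 0‖ₑ} := by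
        refine measure_mono fun ω ⟨k, hk, hlt⟩ => ?_
        calc ENNReal.ofReal c ≤ ‖(∑ j ∈ Icc 1 k,
              Complex.exp (Complex.I * j * t) * (if a < |X j ω| then X j ω else 0) : ℂ)‖ₑ := by
              rw [← ofReal_norm]; exact ENNReal.ofReal_le_ofReal hlt.le
          _ ≤ _ := enorm_sum_exp_mul_le t _ (mem_Icc.1 hk).2
    _ ≤ _ := by
        refine (meas_ge_sum_comp_le_card_mul_lintegral_div hid (measurable_enorm_ite_lt_abs a)
          (ENNReal.ofReal_pos.2 hc).ne' ENNReal.ofReal_ne_top).trans_eq ?_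
        rw [Nat.card_Icc, Nat.add_sub_cancel, ENNReal.div_eq_inv_mul,
          ← ENNReal.ofReal_inv_of_pos hc, mul_assoc]

end Probability

theorem large_part_series_bound_general (p r : ℝ) (hp1 : 1 < p)
    (hr1 : 1 ≤ r) :
    ∃ C : ℝ, 0 < C ∧
      ∀ (Ω : Type) (_ : MeasureSpace Ω) (_ : IsProbabilityMeasure (ℙ : Measure Ω))
        (X : ℕ → Ω → ℝ) (ε : ℝ), 0 < ε →
        (∀ n, 1 ≤ n → IdentDistrib (X n) (X 1) ℙ ℙ) →
        Integrable (fun ω => |X 1 ω| ^ p) ℙ →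
        ∀ t : ℝ, t ∈ Set.Ico (-π) π →
          (∑' n : ℕ,
              ENNReal.ofReal ((n + 1 : ℝ) ^ (p / r - 2)) *
                (ℙ : Measure Ω)
                  {ω | ∃ k ∈ Finset.Icc 1 (n + 1),
                    ε * (n + 1 : ℝ) ^ (1 / r) <
                      ‖(∑ j ∈ Finset.Icc 1 k,
                          Complex.exp (Complex.I * j * t) *
                            (if (n + 1 : ℝ) ^ (1 / r) < |X j ω| then X j ω else 0) : ℂ)‖})
            ≤ ENNReal.ofReal (C * ε⁻¹ * ∫ ω, |X 1 ω| ^ p ∂(ℙ : Measure Ω)) := by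
  have hr : 0 < r := one_pos.trans_le hr1
  refine ⟨1 + r / (p - 1), by have := div_pos hr (sub_pos.2 hp1); linarith, ?_⟩
  intro Ω _ _ X ε hε hid hint t _
  set f : ℕ → ℝ → ℝ≥0∞ := fun n y => ENNReal.ofReal ((n + 1 : ℝ) ^ (p / r - 2)) *
    ENNReal.ofReal (ε * (n + 1 : ℝ) ^ (1 / r))⁻¹ * ((n + 1 : ℕ) : ℝ≥0∞) *
    ‖if (n + 1 : ℝ) ^ (1 / r) < |y| then y else 0‖ₑ with hf
  have hX1 : AEMeasurable (X 1) ℙ := (hid 1 le_rfl).aemeasurable_fst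
  calc _ ≤ ∑' n : ℕ, ∫⁻ ω, f n (X 1 ω) := ENNReal.tsum_le_tsum fun n => by
        rw [hf, lintegral_const_mul' _ _ (by finiteness), mul_assoc, mul_assoc]
        gcongr
        rw [← mul_assoc]
        exact measure_exists_norm_partial_sum_gt_le (fun j hj => hid j (mem_Icc.1 hj).1) t _
          (by positivity)
    _ = ∫⁻ ω, ∑' n, f n (X 1 ω) ∂ℙ :=
        (lintegral_tsum fun _ =>
          ((measurable_enorm_ite_lt_abs _).comp_aemeasurable hX1).const_mul _).symm
    _ ≤ ∫⁻ ω, ENNReal.ofReal ((1 + r / (p - 1)) * ε⁻¹ * |X 1 ω| ^ p) ∂ℙ :=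
        lintegral_mono fun ω => tsum_rpow_weight_mul_enorm_ite_le hp1 hr hε _
    _ = _ := by
        rw [← ofReal_integral_eq_lintegral_ofReal (hint.const_mul _)
          (ae_of_all _ fun ω => by positivity), integral_const_mul]

theorem large_part_series_bound (p r : ℝ) (hp1 : 1 < p) (hp2 : p < 2)
    (hr1 : 1 ≤ r) (hrp : r ≤ p) :
    ∃ C : ℝ, 0 < C ∧
      ∀ (Ω : Type) (_ : MeasureSpace Ω) (_ : IsProbabilityMeasure (ℙ : Measure Ω))
        (X : ℕ → Ω → ℝ) (ε : ℝ), 0 < ε →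
        (∀ n, 1 ≤ n → IdentDistrib (X n) (X 1) ℙ ℙ) →
        Integrable (fun ω => |X 1 ω| ^ p) ℙ →
        ∀ t : ℝ, t ∈ Set.Ico (-π) π →
          (∑' n : ℕ,
              ENNReal.ofReal ((n + 1 : ℝ) ^ (p / r - 2)) *
                (ℙ : Measure Ω)
                  {ω | ∃ k ∈ Finset.Icc 1 (n + 1),
                    ε * (n + 1 : ℝ) ^ (1 / r) <
                      ‖(∑ j ∈ Finset.Icc 1 k,
                          Complex.exp (Complex.I * j * t) *
                            (if (n + 1 : ℝ) ^ (1 / r) < |X j ω| then X j ω else 0) : ℂ)‖})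
            ≤ ENNReal.ofReal (C * ε⁻¹ * ∫ ω, |X 1 ω| ^ p ∂(ℙ : Measure Ω)) :=
  large_part_series_bound_general p r hp1 hr1
end
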